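/- Define the numerator c^num(ξ₁,ξ₂) := (m − 2ξ₁ξ₂)q₀₁(ξ₁,ξ₂) − 2(ξ₂² + m)q₀₁(ξ₂,ξ₁). Then there exists a polynomial r(ξ₁,ξ₂) with complex coefficients of total degree at most 3 such that for all real ξ₁, ξ₂, c^num(ξ₁,ξ₂) = 2(2g⁰¹_{uₓ} + g¹¹_{uₜ})·ξ₁ξ₂²·(ξ₁ + ξ₂) + r(ξ₁,ξ₂). In particular the top-degree (degree four) homogeneous part of c^num is divisible by ξ₁ + ξ₂. -/
import Mathlib


open Complex

/-- `q₀₁(ξ₁,ξ₂) = f_{uₜu} + 2i g⁰¹_u ξ₁ − 2 g⁰¹_{uₓ} ξ₁ξ₂ − g¹¹_{uₜ} ξ₂²`. -/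
noncomputable def q01 (futu g01u g01ux g11ut : ℝ) (ξ₁ ξ₂ : ℝ) : ℂ :=
  (futu : ℂ) + 2 * Complex.I * g01u * ξ₁ - 2 * g01ux * ξ₁ * ξ₂
    - (g11ut : ℂ) * (ξ₂ : ℂ)^2

/-- The numerator `c^num = (m − 2ξ₁ξ₂)q₀₁(ξ₁,ξ₂) − 2(ξ₂² + m)q₀₁(ξ₂,ξ₁)`. -/
noncomputable def cNum (m futu g01u g01ux g11ut : ℝ) (ξ₁ ξ₂ : ℝ) : ℂ :=
  ((m : ℂ) - 2*ξ₁*ξ₂) * q01 futu g01u g01ux g11ut ξ₁ ξ₂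
    - 2*((ξ₂ : ℂ)^2 + m) * q01 futu g01u g01ux g11ut ξ₂ ξ₁

open MvPolynomial in
lemma aux_td (a : ℂ) (i j : ℕ) :
    (C a * X (0 : Fin 2) ^ i * X 1 ^ j : MvPolynomial (Fin 2) ℂ).totalDegree ≤ i + j := by
  calc (C a * X (0 : Fin 2) ^ i * X 1 ^ j).totalDegree
      ≤ (C a * X (0 : Fin 2) ^ i).totalDegree + (X (1 : Fin 2) ^ j : MvPolynomial (Fin 2) ℂ).totalDegree :=
        totalDegree_mul _ _
    _ ≤ ((C a).totalDegree + (X (0 : Fin 2) ^ i : MvPolynomial (Fin 2) ℂ).totalDegree) + j := by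
        gcongr
        · exact totalDegree_mul _ _
        · exact (totalDegree_X_pow _ _).le
    _ ≤ i + j := by
        simp [totalDegree_C, totalDegree_X_pow]

/-- High–high factorization of `c^num`: its degree-four homogeneous part is
`2(2g⁰¹_{uₓ} + g¹¹_{uₜ})·ξ₁ξ₂²·(ξ₁ + ξ₂)`, which is divisible by `ξ₁ + ξ₂`;
the remainder is a polynomial of total degree at most 3. -/
theorem cNum_high_high_factorization (m futu g01u g01ux g11ut : ℝ) (hm : 0 < m) :
    ∃ r : MvPolynomial (Fin 2) ℂ, r.totalDegree ≤ 3 ∧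
      ∀ ξ₁ ξ₂ : ℝ,
        cNum m futu g01u g01ux g11ut ξ₁ ξ₂
          = 2 * (2*(g01ux : ℂ) + g11ut) * (ξ₁ : ℂ) * (ξ₂ : ℂ)^2
              * ((ξ₁ : ℂ) + ξ₂)
            + MvPolynomial.eval ![(ξ₁ : ℂ), (ξ₂ : ℂ)] r := by
  classical
  open MvPolynomial in
  refine ⟨C (-(m : ℂ) * futu)
    + C (2 * (m : ℂ) * Complex.I * g01u) * X 0 ^ 1 * X 1 ^ 0
    + C (-4 * (m : ℂ) * Complex.I * g01u) * X 0 ^ 0 * X 1 ^ 1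
    + C (2 * (m : ℂ) * g11ut) * X 0 ^ 2 * X 1 ^ 0
    + C (2 * (m : ℂ) * g01ux - 2 * futu) * X 0 ^ 1 * X 1 ^ 1
    + C (-(m : ℂ) * g11ut - 2 * futu) * X 0 ^ 0 * X 1 ^ 2
    + C (-4 * Complex.I * (g01u : ℂ)) * X 0 ^ 2 * X 1 ^ 1
    + C (-4 * Complex.I * (g01u : ℂ)) * X 0 ^ 0 * X 1 ^ 3, ?_, ?_⟩
  · refine le_trans (totalDegree_add _ _) (max_le (le_trans (totalDegree_add _ _)
      (max_le (le_trans (totalDegree_add _ _) (max_le (le_trans (totalDegree_add _ _)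
      (max_le (le_trans (totalDegree_add _ _) (max_le (le_trans (totalDegree_add _ _)
      (max_le (le_trans (totalDegree_add _ _) (max_le ?_ ?_)) ?_)) ?_)) ?_)) ?_)) ?_)) ?_)
    · exact (totalDegree_C (σ := Fin 2) (-(m : ℂ) * futu)).le.trans (by norm_num)
    all_goals exact le_trans (aux_td _ _ _) (by norm_num)
  · intro ξ₁ ξ₂
    simp only [cNum, q01, map_add, map_mul, map_pow, eval_C, eval_X, Matrix.cons_val_zero,
      Matrix.cons_val_one, Matrix.head_cons]
    ring
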